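/- arXiv:1105.1642 — 3 statements merged into one kernel-verified Lean document; each statement's English description precedes it below -/
import Mathlib

section
/- Let (E_i)_{i∈I} be topological vector spaces over 𝕂 with locally convex (not necessarily Hausdorff) topologies and v_i : E_i → F arbitrary mappings into a 𝕂-vector space F. Then there exists a finest locally convex topology 𝒯_f on F such that every v_i is bounded with respect to the von Neumann bornologies, and (F, 𝒯_f) is bornological: every linear mapping from (F, 𝒯_f) into any locally convex space which is bounded is already continuous. -/
/-! The finest locally convex topology making every `v i` bounded is the infimum `τf` of all
such topologies: infima of locally convex topologies are locally convex, and a set is bounded for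
an infimum iff it is bounded for each member. If `T : F → G` is linear and bounded for `τf`, then
`τf ⊓ induced T` is again a candidate (`T ∘ v i` is bounded), so maximality gives
`τf ≤ induced T`, which is continuity of `T`. -/

open Set

def RCConvex (𝕜 : Type*) [RCLike 𝕜] {E : Type*} [AddCommGroup E] [Module 𝕜 E]
    (s : Set E) : Prop :=
  ∀ ⦃x⦄, x ∈ s → ∀ ⦃y⦄, y ∈ s → ∀ t : ℝ, 0 ≤ t → t ≤ 1 →
    ((t : 𝕜) • x + (((1 - t : ℝ) : 𝕜)) • y) ∈ s

def IsLinearTop (𝕜 : Type*) [RCLike 𝕜] (E : Type*) [AddCommGroup E] [Module 𝕜 E]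
    (τ : TopologicalSpace E) : Prop :=
  @IsTopologicalAddGroup E τ _ ∧ @ContinuousSMul 𝕜 E _ _ τ

def IsLCTop (𝕜 : Type*) [RCLike 𝕜] (E : Type*) [AddCommGroup E] [Module 𝕜 E]
    (τ : TopologicalSpace E) : Prop :=
  IsLinearTop 𝕜 E τ ∧ ∀ U ∈ @nhds E τ 0, ∃ V ∈ @nhds E τ 0, V ⊆ U ∧ RCConvex 𝕜 V

def VNBdd (𝕜 : Type*) [RCLike 𝕜] {E : Type*} [AddCommGroup E] [Module 𝕜 E]
    (τ : TopologicalSpace E) (s : Set E) : Prop :=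
  ∀ V ∈ @nhds E τ 0, Absorbs 𝕜 V s

def BddMap (𝕜 : Type*) [RCLike 𝕜] {E F : Type*} [AddCommGroup E] [Module 𝕜 E]
    [AddCommGroup F] [Module 𝕜 F]
    (τE : TopologicalSpace E) (τF : TopologicalSpace F) (f : E → F) : Prop :=
  ∀ s : Set E, VNBdd 𝕜 τE s → VNBdd 𝕜 τF (f '' s)

open Filter Topology Bornology

namespace RCConvex

variable {𝕜 : Type*} [RCLike 𝕜] {E : Type*} [AddCommGroup E] [Module 𝕜 E]

lemma biInter {ι : Type*} {J : Set ι} {s : ι → Set E} (h : ∀ i ∈ J, RCConvex 𝕜 (s i)) :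
    RCConvex 𝕜 (⋂ i ∈ J, s i) := by
  intro x hx y hy t ht₀ ht₁
  simp only [mem_iInter] at hx hy ⊢
  exact fun i hi => h i hi (hx i hi) (hy i hi) t ht₀ ht₁

lemma linear_preimage {G : Type*} [AddCommGroup G] [Module 𝕜 G] (T : E →ₗ[𝕜] G) {s : Set G}
    (h : RCConvex 𝕜 s) : RCConvex 𝕜 (T ⁻¹' s) := by
  intro x hx y hy t ht₀ ht₁
  simpa only [mem_preimage, map_add, map_smul] using h hx hy t ht₀ ht₁

end RCConvex

section LocallyConvex

variable {𝕜 : Type*} [RCLike 𝕜] {E : Type*} [AddCommGroup E] [Module 𝕜 E]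

lemma IsLCTop.hasBasis_nhds_zero {τ : TopologicalSpace E} (h : IsLCTop 𝕜 E τ) :
    (@nhds E τ 0).HasBasis (fun V => V ∈ @nhds E τ 0 ∧ RCConvex 𝕜 V) id :=
  hasBasis_self.2 fun U hU =>
    let ⟨V, hV, hVU, hVc⟩ := h.2 U hU
    ⟨V, hV, hVc, hVU⟩

lemma isLCTop_sInf {S : Set (TopologicalSpace E)} (h : ∀ τ ∈ S, IsLCTop 𝕜 E τ) :
    IsLCTop 𝕜 E (sInf S) := by
  refine ⟨⟨topologicalAddGroup_sInf fun τ hτ => (h τ hτ).1.1,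
    continuousSMul_sInf fun τ hτ => (h τ hτ).1.2⟩, fun U hU => ?_⟩
  have hB := HasBasis.iInf' fun τ : S => (h τ τ.2).hasBasis_nhds_zero
  rw [nhds_sInf, ← iInf_subtype''] at hU ⊢
  obtain ⟨⟨J, W⟩, ⟨hJ, hW⟩, hWU⟩ := hB.mem_iff.1 hU
  exact ⟨_, hB.mem_of_mem ⟨hJ, hW⟩, hWU, RCConvex.biInter fun τ hτ => (hW τ hτ).2⟩

lemma IsLCTop.inf {τ₁ τ₂ : TopologicalSpace E} (h₁ : IsLCTop 𝕜 E τ₁) (h₂ : IsLCTop 𝕜 E τ₂) :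
    IsLCTop 𝕜 E (τ₁ ⊓ τ₂) := by
  rw [← sInf_pair]
  exact isLCTop_sInf (by rintro τ (rfl | rfl) <;> assumption)

lemma IsLCTop.induced {G : Type*} [AddCommGroup G] [Module 𝕜 G] {τG : TopologicalSpace G}
    (hG : IsLCTop 𝕜 G τG) (T : E →ₗ[𝕜] G) : IsLCTop 𝕜 E (τG.induced T) := by
  let _ := τG
  have := hG.1.1
  have := hG.1.2
  refine ⟨⟨topologicalAddGroup_induced T, continuousSMul_induced T⟩, fun U hU => ?_⟩
  have hB : (@nhds E (τG.induced T) 0).HasBasis (fun V => V ∈ 𝓝 (0 : G) ∧ RCConvex 𝕜 V)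
      (T ⁻¹' ·) := by
    rw [nhds_induced, map_zero]; exact hG.hasBasis_nhds_zero.comap T
  obtain ⟨W, hW, hWU⟩ := hB.mem_iff.1 hU
  exact ⟨_, hB.mem_of_mem hW, hWU, hW.2.linear_preimage T⟩

end LocallyConvex

section Bounded

variable {𝕜 : Type*} [RCLike 𝕜] {E : Type*} [AddCommGroup E] [Module 𝕜 E]

lemma vnBdd_iff_isVonNBounded {τ : TopologicalSpace E} {s : Set E} :
    VNBdd 𝕜 τ s ↔ @IsVonNBounded 𝕜 E _ _ _ τ s :=
  Iff.rfl

lemma vnBdd_iInf {ι : Sort*} {t : ι → TopologicalSpace E} {s : Set E} :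
    VNBdd 𝕜 (⨅ i, t i) s ↔ ∀ i, VNBdd 𝕜 (t i) s := by
  simp only [vnBdd_iff_isVonNBounded, @isVonNBounded_iff_absorbing_le, nhds_iInf, le_iInf_iff]

lemma vnBdd_induced {G : Type*} [AddCommGroup G] [Module 𝕜 G] {τG : TopologicalSpace G}
    (T : E →ₗ[𝕜] G) {s : Set E} : VNBdd 𝕜 (τG.induced T) s ↔ VNBdd 𝕜 τG (T '' s) := by
  simp only [vnBdd_iff_isVonNBounded, @isVonNBounded_iff_tendsto_smallSets_nhds, nhds_induced,
    map_zero, smallSets_comap_eq_comap_image, tendsto_comap_iff, Function.comp_def,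
    ← image_smul_set]

end Bounded

section BoundedMaps

variable {𝕜 : Type*} [RCLike 𝕜] {E F G : Type*} [AddCommGroup E] [Module 𝕜 E]
  [AddCommGroup F] [Module 𝕜 F] [AddCommGroup G] [Module 𝕜 G]
  {τE : TopologicalSpace E} {τF : TopologicalSpace F} {τG : TopologicalSpace G}

lemma BddMap.comp {g : F → G} {f : E → F} (hg : BddMap 𝕜 τF τG g) (hf : BddMap 𝕜 τE τF f) :
    BddMap 𝕜 τE τG (g ∘ f) := fun s hs => by
  rw [image_comp]
  exact hg _ (hf s hs)

lemma bddMap_iInf {ι : Sort*} {t : ι → TopologicalSpace F} {f : E → F} :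
    BddMap 𝕜 τE (⨅ i, t i) f ↔ ∀ i, BddMap 𝕜 τE (t i) f := by
  simp only [BddMap, vnBdd_iInf]
  exact ⟨fun h i s hs => h s hs i, fun h s hs i => h i s hs⟩

lemma bddMap_sInf {S : Set (TopologicalSpace F)} {f : E → F} :
    BddMap 𝕜 τE (sInf S) f ↔ ∀ τ ∈ S, BddMap 𝕜 τE τ f := by
  simp only [sInf_eq_iInf, bddMap_iInf]

lemma BddMap.inf {τ₁ τ₂ : TopologicalSpace F} {f : E → F} (h₁ : BddMap 𝕜 τE τ₁ f)
    (h₂ : BddMap 𝕜 τE τ₂ f) : BddMap 𝕜 τE (τ₁ ⊓ τ₂) f := by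
  rw [inf_eq_iInf]
  exact bddMap_iInf.2 (Bool.forall_bool.2 ⟨h₂, h₁⟩)

lemma bddMap_induced (T : F →ₗ[𝕜] G) {f : E → F} :
    BddMap 𝕜 τE (τG.induced T) f ↔ BddMap 𝕜 τE τG (T ∘ f) := by
  simp only [BddMap, vnBdd_induced, image_comp]

end BoundedMaps

section Finest

variable {𝕜 : Type*} [RCLike 𝕜] {I : Type*} {F : Type*} [AddCommGroup F] [Module 𝕜 F]
  {Ei : I → Type*} [∀ i, AddCommGroup (Ei i)] [∀ i, Module 𝕜 (Ei i)]
  (τi : ∀ i, TopologicalSpace (Ei i)) (v : ∀ i, Ei i → F)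

variable (𝕜 F) in
abbrev finestBddLCTop : TopologicalSpace F :=
  sInf {τ | IsLCTop 𝕜 F τ ∧ ∀ i, BddMap 𝕜 (τi i) τ (v i)}

lemma isLCTop_finestBddLCTop : IsLCTop 𝕜 F (finestBddLCTop 𝕜 F τi v) :=
  isLCTop_sInf fun _ hτ => hτ.1

lemma bddMap_finestBddLCTop (i : I) : BddMap 𝕜 (τi i) (finestBddLCTop 𝕜 F τi v) (v i) :=
  bddMap_sInf.2 fun _ hτ => hτ.2 i

lemma finestBddLCTop_le {τ : TopologicalSpace F} (hτ : IsLCTop 𝕜 F τ)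
    (hv : ∀ i, BddMap 𝕜 (τi i) τ (v i)) : finestBddLCTop 𝕜 F τi v ≤ τ :=
  sInf_le ⟨hτ, hv⟩

theorem continuous_of_bddMap_finestBddLCTop {G : Type*} [AddCommGroup G] [Module 𝕜 G]
    {τG : TopologicalSpace G} (hG : IsLCTop 𝕜 G τG) (T : F →ₗ[𝕜] G)
    (hT : BddMap 𝕜 (finestBddLCTop 𝕜 F τi v) τG T) :
    Continuous[finestBddLCTop 𝕜 F τi v, τG] T := by
  have hv := bddMap_finestBddLCTop (𝕜 := 𝕜) τi v
  have hle : finestBddLCTop 𝕜 F τi v ≤ finestBddLCTop 𝕜 F τi v ⊓ τG.induced T :=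
    finestBddLCTop_le τi v ((isLCTop_finestBddLCTop τi v).inf (hG.induced T))
      fun i => (hv i).inf ((bddMap_induced T).2 (hT.comp (hv i)))
  exact continuous_iff_le_induced.2 (hle.trans inf_le_right)

end Finest

universe uG

theorem statement4_general {𝕜 : Type*} [RCLike 𝕜] {I : Type*} (F : Type*)
    [AddCommGroup F] [Module 𝕜 F]
    (Ei : I → Type*) [∀ i, AddCommGroup (Ei i)] [∀ i, Module 𝕜 (Ei i)]
    (τi : ∀ i, TopologicalSpace (Ei i))
    (v : ∀ i, Ei i → F) :
    ∃ τf : TopologicalSpace F,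
      IsLCTop 𝕜 F τf ∧
      (∀ i, BddMap 𝕜 (τi i) τf (v i)) ∧
      (∀ τ : TopologicalSpace F, IsLCTop 𝕜 F τ →
        (∀ i, BddMap 𝕜 (τi i) τ (v i)) → τf ≤ τ) ∧
      -- `(F, τf)` is bornological
      (∀ (G : Type uG) (_ : AddCommGroup G), ∀ (_ : Module 𝕜 G),
        ∀ (τG : TopologicalSpace G), IsLCTop 𝕜 G τG →
        ∀ T : F →ₗ[𝕜] G, BddMap 𝕜 τf τG T → @Continuous F G τf τG T) :=
  ⟨finestBddLCTop 𝕜 F τi v, isLCTop_finestBddLCTop τi v, bddMap_finestBddLCTop τi v,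
    fun _ => finestBddLCTop_le τi v,
    fun _ _ _ _ hG T hT => continuous_of_bddMap_finestBddLCTop τi v hG T hT⟩

theorem statement4 {𝕜 : Type*} [RCLike 𝕜] {I : Type*} (F : Type*)
    [AddCommGroup F] [Module 𝕜 F]
    (Ei : I → Type*) [∀ i, AddCommGroup (Ei i)] [∀ i, Module 𝕜 (Ei i)]
    (τi : ∀ i, TopologicalSpace (Ei i)) (hτi : ∀ i, IsLCTop 𝕜 (Ei i) (τi i))
    (v : ∀ i, Ei i → F) :
    ∃ τf : TopologicalSpace F,
      IsLCTop 𝕜 F τf ∧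
      (∀ i, BddMap 𝕜 (τi i) τf (v i)) ∧
      (∀ τ : TopologicalSpace F, IsLCTop 𝕜 F τ →
        (∀ i, BddMap 𝕜 (τi i) τ (v i)) → τf ≤ τ) ∧
      -- `(F, τf)` is bornological
      (∀ (G : Type uG) (_ : AddCommGroup G), ∀ (_ : Module 𝕜 G),
        ∀ (τG : TopologicalSpace G), IsLCTop 𝕜 G τG →
        ∀ T : F →ₗ[𝕜] G, BddMap 𝕜 τf τG T → @Continuous F G τf τG T) :=
  statement4_general F Ei τi v
end

section
/- Let A be a commutative bounded (resp. locally convex) algebra over 𝕂, and M, N bounded (resp. locally convex) A-modules. Then M ⊗_A^β N (resp. M ⊗_A^π N), with the A-module structure determined by a · (m ⊗ n) = (ma) ⊗ n, is a bounded (resp. locally convex) A-module; that is, module multiplication A × (M ⊗_A^β N) → M ⊗_A^β N is bounded (resp. A × (M ⊗_A^π N) → M ⊗_A^π N is continuous). -/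
/-!
STATEMENT 10: for a commutative bounded (resp. locally convex) algebra `A` and
bounded (resp. locally convex) `A`-modules `M`, `N`, the tensor product
`M ⊗_A^β N` (resp. `M ⊗_A^π N`) carries an `A`-module structure determined by
`a · (m ⊗ n) = (a m) ⊗ n`, and module multiplication is bounded (resp. continuous).
-/

open MulOpposite Set
open scoped TensorProduct Pointwise

/-- A family `S` of maps is (equi-)bounded: this is exactly von Neumann boundedness
of `S` in the topology of uniform convergence on bounded sets. -/
def FamBdd (𝕜 : Type*) [RCLike 𝕜] {E F : Type*} [AddCommGroup E] [Module 𝕜 E]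
    [AddCommGroup F] [Module 𝕜 F]
    (τE : TopologicalSpace E) (τF : TopologicalSpace F) (S : Set (E → F)) : Prop :=
  ∀ s : Set E, VNBdd 𝕜 τE s → VNBdd 𝕜 τF (⋃ f ∈ S, f '' s)

/-- `𝕜`-bilinearity of a map on a product. -/
def IsBilinMap (𝕜 : Type*) [RCLike 𝕜] {M N E : Type*} [AddCommGroup M] [Module 𝕜 M]
    [AddCommGroup N] [Module 𝕜 N] [AddCommGroup E] [Module 𝕜 E]
    (f : M × N → E) : Prop :=
  (∀ m m' n, f (m + m', n) = f (m, n) + f (m', n)) ∧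
  (∀ (c : 𝕜) m n, f (c • m, n) = c • f (m, n)) ∧
  (∀ m n n', f (m, n + n') = f (m, n) + f (m, n')) ∧
  (∀ (c : 𝕜) m n, f (m, c • n) = c • f (m, n))

/-- `f` is `A`-balanced: `f (m·a, n) = f (m, a·n)`; the right `A`-module structure
on `M` is given by a `Aᵐᵒᵖ`-module structure. -/
def IsBalancedMap (A : Type*) [Ring A] {M N E : Type*} [AddCommGroup M]
    [Module Aᵐᵒᵖ M] [AddCommGroup N] [Module A N] (f : M × N → E) : Prop :=
  ∀ (a : A) (m : M) (n : N), f (op a • m, n) = f (m, a • n)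

/-- `τ` is the projective tensor product topology on `M ⊗[𝕜] N`: the finest locally
convex topology making the canonical bilinear map continuous. -/
def IsProjTensorTop (𝕜 : Type*) [RCLike 𝕜] {M N : Type*} [AddCommGroup M] [Module 𝕜 M]
    [AddCommGroup N] [Module 𝕜 N] (τM : TopologicalSpace M) (τN : TopologicalSpace N)
    (τ : TopologicalSpace (TensorProduct 𝕜 M N)) : Prop :=
  IsLCTop 𝕜 (TensorProduct 𝕜 M N) τ ∧
  @Continuous (M × N) (TensorProduct 𝕜 M N) (@instTopologicalSpaceProd M N τM τN) τ
    (fun p => p.1 ⊗ₜ[𝕜] p.2) ∧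
  ∀ τ' : TopologicalSpace (TensorProduct 𝕜 M N), IsLCTop 𝕜 (TensorProduct 𝕜 M N) τ' →
    @Continuous (M × N) (TensorProduct 𝕜 M N) (@instTopologicalSpaceProd M N τM τN) τ'
      (fun p => p.1 ⊗ₜ[𝕜] p.2) → τ ≤ τ'

/-- `τ` is the bornological tensor product topology on `M ⊗[𝕜] N`: the finest locally
convex topology making the canonical bilinear map bounded. -/
def IsBetaTensorTop (𝕜 : Type*) [RCLike 𝕜] {M N : Type*} [AddCommGroup M] [Module 𝕜 M]
    [AddCommGroup N] [Module 𝕜 N] (τM : TopologicalSpace M) (τN : TopologicalSpace N)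
    (τ : TopologicalSpace (TensorProduct 𝕜 M N)) : Prop :=
  IsLCTop 𝕜 (TensorProduct 𝕜 M N) τ ∧
  BddMap 𝕜 (@instTopologicalSpaceProd M N τM τN) τ (fun p : M × N => p.1 ⊗ₜ[𝕜] p.2) ∧
  ∀ τ' : TopologicalSpace (TensorProduct 𝕜 M N), IsLCTop 𝕜 (TensorProduct 𝕜 M N) τ' →
    BddMap 𝕜 (@instTopologicalSpaceProd M N τM τN) τ' (fun p : M × N => p.1 ⊗ₜ[𝕜] p.2) →
      τ ≤ τ'

/-- The subspace `J₀` of `M ⊗[𝕜] N` spanned by the elements `m·a ⊗ n - m ⊗ a·n`. -/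
def balancedRel (𝕜 A : Type*) [RCLike 𝕜] [Ring A] [Algebra 𝕜 A] (M N : Type*)
    [AddCommGroup M] [Module 𝕜 M] [Module Aᵐᵒᵖ M]
    [AddCommGroup N] [Module 𝕜 N] [Module A N] :
    Submodule 𝕜 (TensorProduct 𝕜 M N) :=
  Submodule.span 𝕜
    {x | ∃ (a : A) (m : M) (n : N), x = (op a • m) ⊗ₜ[𝕜] n - m ⊗ₜ[𝕜] (a • n)}

/-- The subspace `J₀` for modules over a commutative algebra `A`. -/
def balancedRelComm (𝕜 A : Type*) [RCLike 𝕜] [CommRing A] [Algebra 𝕜 A] (M N : Type*)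
    [AddCommGroup M] [Module 𝕜 M] [Module A M]
    [AddCommGroup N] [Module 𝕜 N] [Module A N] :
    Submodule 𝕜 (TensorProduct 𝕜 M N) :=
  Submodule.span 𝕜
    {x | ∃ (a : A) (m : M) (n : N), x = (a • m) ⊗ₜ[𝕜] n - m ⊗ₜ[𝕜] (a • n)}


/-!
The action of `a : A` on `M ⊗ N` is `(a • ·) ⊗ id`. It preserves `J₀` and, being continuous,
its closure `J`, so it descends to `M ⊗_A N`.

Both tensor topologies are detected by absolutely convex sets: `B ⊆ M ⊗ N` is a zero
neighbourhood as soon as it absorbs the tensors of every bounded subset of `M × N` (β), resp.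
contains `U ⊗ V` for zero neighbourhoods `U`, `V` (π), because the multiples of `B` form a basis
of a locally convex topology for which `⊗` is bounded, resp. continuous. Given an absolutely
convex zero neighbourhood `W` and a bounded set, resp. a small zero neighbourhood, `S ⊆ A`, the
boundedness, resp. continuity, of the action on `M` makes `{x | ∀ a ∈ S, a • x ∈ W}` such a set.
Hence `(a, x) ↦ a • x` tends to `0` along `𝓟 S ×ˢ 𝓝 0`, resp. `𝓝 0 ×ˢ 𝓝 0`. These limits pass
through the open quotient map and, the action being bilinear, give boundedness, resp.
continuity, of the action on `M ⊗_A N`.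
-/

open Filter Topology Bornology

section AbsConvex

variable {𝕜 E : Type*} [RCLike 𝕜] [AddCommGroup E] [Module 𝕜 E]

theorem rcConvex_iInter {ι : Sort*} {s : ι → Set E} (h : ∀ i, RCConvex 𝕜 (s i)) :
    RCConvex 𝕜 (⋂ i, s i) := fun _ hx _ hy t h0 h1 =>
  mem_iInter.2 fun i => h i (mem_iInter.1 hx i) (mem_iInter.1 hy i) t h0 h1

theorem RCConvex.smul_set {s : Set E} (hs : RCConvex 𝕜 s) (c : 𝕜) : RCConvex 𝕜 (c • s) := by
  rintro _ ⟨x, hx, rfl⟩ _ ⟨y, hy, rfl⟩ t h0 h1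
  exact ⟨_, hs hx hy t h0 h1, by simp only [smul_add, smul_comm c]⟩

theorem RCConvex.half_smul_add_half_smul_subset {s : Set E} (hs : RCConvex 𝕜 s) :
    (2 : 𝕜)⁻¹ • s + (2 : 𝕜)⁻¹ • s ⊆ s := by
  rintro _ ⟨_, ⟨x, hx, rfl⟩, _, ⟨y, hy, rfl⟩, rfl⟩
  simpa [show (1 : ℝ) - 2⁻¹ = 2⁻¹ by norm_num, map_ofNat] using
    hs hx hy 2⁻¹ (by norm_num) (by norm_num)

theorem Absorbs.smul_set_left {s t : Set E} (h : Absorbs 𝕜 s t) {c : 𝕜} (hc : c ≠ 0) :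
    Absorbs 𝕜 (c • s) t :=
  ((tendsto_mul_right_cobounded hc).eventually h).mono fun a ha => by rwa [smul_smul]

theorem RCConvex.absorbs_add {s X Y : Set E} (hs : RCConvex 𝕜 s) (hX : Absorbs 𝕜 s X)
    (hY : Absorbs 𝕜 s Y) : Absorbs 𝕜 s (X + Y) :=
  ((hX.smul_set_left (inv_ne_zero two_ne_zero)).add
    (hY.smul_set_left (inv_ne_zero two_ne_zero))).mono_left hs.half_smul_add_half_smul_subset

theorem IsLCTop.exists_balanced_rcConvex_subset [TopologicalSpace E]
    (h : IsLCTop 𝕜 E inferInstance) {W : Set E} (hW : W ∈ 𝓝 0) :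
    ∃ V ∈ 𝓝 (0 : E), V ⊆ W ∧ Balanced 𝕜 V ∧ RCConvex 𝕜 V := by
  have := h.1.2
  obtain ⟨V, hV, hVW, hVc⟩ := h.2 W hW
  refine ⟨balancedCore 𝕜 V, balancedCore_mem_nhds_zero hV,
    (balancedCore_subset V).trans hVW, balancedCore_balanced V, ?_⟩
  rw [balancedCore_eq_iInter (mem_of_mem_nhds hV)]
  exact rcConvex_iInter fun r => rcConvex_iInter fun _ => hVc.smul_set r

variable {A : Type*} [Monoid A] [DistribMulAction A E] [SMulCommClass A 𝕜 E]
  {W : Set E} (S : Set A)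

theorem Balanced.setOf_forall_smul_mem (hW : Balanced 𝕜 W) :
    Balanced 𝕜 {x : E | ∀ a ∈ S, a • x ∈ W} := by
  rintro c hc _ ⟨x, hx, rfl⟩ a ha
  rw [smul_comm]
  exact hW c hc (smul_mem_smul_set (hx a ha))

theorem RCConvex.setOf_forall_smul_mem (hW : RCConvex 𝕜 W) :
    RCConvex 𝕜 {x : E | ∀ a ∈ S, a • x ∈ W} := by
  intro x hx y hy t h0 h1 a ha
  rw [smul_add, smul_comm, smul_comm a]
  exact hW (hx a ha) (hy a ha) t h0 h1

theorem Absorbs.setOf_forall_smul_mem {X : Set E} (h : Absorbs 𝕜 W (S • X)) :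
    Absorbs 𝕜 {x : E | ∀ a ∈ S, a • x ∈ W} X :=
  (h.eventually.and (eventually_ne_cobounded 0)).mono fun c ⟨hc, hc0⟩ x hx => by
    rw [mem_smul_set_iff_inv_smul_mem₀ hc0]
    intro a ha
    rw [smul_comm, ← mem_smul_set_iff_inv_smul_mem₀ hc0]
    exact hc (smul_mem_smul ha hx)

end AbsConvex

section AbsConvexTopology

variable {𝕜 E : Type*} [RCLike 𝕜] [AddCommGroup E] [Module 𝕜 E]
  {B : Set E} (hb : Balanced 𝕜 B) (hc : RCConvex 𝕜 B) (ha : Absorbent 𝕜 B)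

def absConvexFilterBasis : ModuleFilterBasis 𝕜 E where
  sets := {S | ∃ c : 𝕜, c ≠ 0 ∧ S = c • B}
  nonempty := ⟨B, 1, one_ne_zero, (one_smul 𝕜 B).symm⟩
  inter_sets := by
    rintro _ _ ⟨c, hc0, rfl⟩ ⟨d, hd0, rfl⟩
    rcases le_total ‖c‖ ‖d‖ with h | h
    · exact ⟨c • B, ⟨c, hc0, rfl⟩, subset_inter subset_rfl (hb.smul_mono h)⟩
    · exact ⟨d • B, ⟨d, hd0, rfl⟩, subset_inter (hb.smul_mono h) subset_rfl⟩
  zero' := by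
    rintro _ ⟨c, -, rfl⟩
    exact zero_mem_smul_set ha.zero_mem
  add' := by
    rintro _ ⟨c, hc0, rfl⟩
    refine ⟨c • (2 : 𝕜)⁻¹ • B, ⟨c * 2⁻¹, by simpa using hc0, by rw [smul_smul]⟩, ?_⟩
    rw [← smul_add]
    exact smul_set_mono hc.half_smul_add_half_smul_subset
  neg' := by
    rintro _ ⟨c, hc0, rfl⟩
    exact ⟨c • B, ⟨c, hc0, rfl⟩, fun x hx => (hb.smul c).neg_mem_iff.2 hx⟩
  conj' := by
    rintro x₀ _ ⟨c, hc0, rfl⟩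
    exact ⟨c • B, ⟨c, hc0, rfl⟩, fun x hx => by simpa using hx⟩
  smul' := by
    rintro _ ⟨c, hc0, rfl⟩
    exact ⟨_, Metric.closedBall_mem_nhds 0 one_pos, c • B, ⟨c, hc0, rfl⟩,
      balanced_iff_closedBall_smul.1 (hb.smul c)⟩
  smul_left' := by
    rintro x₀ _ ⟨c, hc0, rfl⟩
    rcases eq_or_ne x₀ 0 with rfl | hx₀
    · exact ⟨c • B, ⟨c, hc0, rfl⟩, fun x _ => by simpa using zero_mem_smul_set ha.zero_mem⟩
    · refine ⟨x₀⁻¹ • c • B, ⟨x₀⁻¹ * c, by simp [hx₀, hc0], by rw [smul_smul]⟩, fun x hx => ?_⟩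
      exact (mem_inv_smul_set_iff₀ hx₀ _ x).1 hx
  smul_right' := by
    rintro m₀ _ ⟨c, hc0, rfl⟩
    exact (((ha m₀).smul_set_left hc0).eventually_nhds_zero
      (zero_mem_smul_set ha.zero_mem)).mono fun x hx => hx rfl

abbrev absConvexTopology : TopologicalSpace E :=
  (absConvexFilterBasis hb hc ha).topology

theorem absConvexTopology_hasBasis :
    (@nhds E (absConvexTopology hb hc ha) 0).HasBasis (fun c : 𝕜 => c ≠ 0) (· • B) :=
  (absConvexFilterBasis hb hc ha).toAddGroupFilterBasis.nhds_zero_hasBasis.to_hasBasis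
    (fun _ ⟨c, hc0, hS⟩ => ⟨c, hc0, hS.ge⟩) fun c hc0 => ⟨c • B, ⟨c, hc0, rfl⟩, subset_rfl⟩

theorem isLCTop_absConvexTopology : IsLCTop 𝕜 E (absConvexTopology hb hc ha) := by
  let := absConvexTopology hb hc ha
  refine ⟨⟨(absConvexFilterBasis hb hc ha).toAddGroupFilterBasis.isTopologicalAddGroup,
    (absConvexFilterBasis hb hc ha).continuousSMul⟩, fun U hU => ?_⟩
  obtain ⟨c, hc0, hcU⟩ := (absConvexTopology_hasBasis hb hc ha).mem_iff.1 hU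
  exact ⟨c • B, (absConvexTopology_hasBasis hb hc ha).mem_of_mem hc0, hcU, hc.smul_set c⟩

end AbsConvexTopology

section Bilinear

variable {𝕜 M N F : Type*} [RCLike 𝕜]
  [AddCommGroup M] [Module 𝕜 M] [TopologicalSpace M]
  [AddCommGroup N] [Module 𝕜 N] [TopologicalSpace N]
  [AddCommGroup F] [Module 𝕜 F] [TopologicalSpace F]

theorem Bornology.IsVonNBounded.prod {s : Set M} {t : Set N} (hs : IsVonNBounded 𝕜 s)
    (ht : IsVonNBounded 𝕜 t) : IsVonNBounded 𝕜 (s ×ˢ t) := by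
  intro W hW
  obtain ⟨U, hU, V, hV, hUV⟩ := mem_nhds_prod_iff.1 hW
  refine ((hs hU).eventually.and (ht hV).eventually).mono fun c ⟨hcs, hct⟩ => ?_
  rintro ⟨x, y⟩ ⟨hx, hy⟩
  obtain ⟨u, hu, rfl⟩ := hcs hx
  obtain ⟨v, hv, rfl⟩ := hct hy
  exact ⟨(u, v), hUV ⟨hu, hv⟩, rfl⟩

theorem Bornology.IsVonNBounded.fst {s : Set (M × N)} (hs : IsVonNBounded 𝕜 s) :
    IsVonNBounded 𝕜 (Prod.fst '' s) :=
  hs.image (ContinuousLinearMap.fst 𝕜 M N)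

theorem Bornology.IsVonNBounded.snd {s : Set (M × N)} (hs : IsVonNBounded 𝕜 s) :
    IsVonNBounded 𝕜 (Prod.snd '' s) :=
  hs.image (ContinuousLinearMap.snd 𝕜 M N)

theorem bddMap_of_tendsto_principal_isVonNBounded (f : M → N →ₗ[𝕜] F)
    (h : ∀ S : Set M, IsVonNBounded 𝕜 S →
      Tendsto (fun p : M × N => f p.1 p.2) (𝓟 S ×ˢ 𝓝 0) (𝓝 0)) :
    BddMap 𝕜 inferInstance inferInstance fun p : M × N => f p.1 p.2 := by
  intro s hs W hW
  obtain ⟨S, hS, Ω, hΩ, hSΩ⟩ := mem_prod_iff.1 (h _ (IsVonNBounded.fst hs) hW)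
  refine Filter.Eventually.mono (IsVonNBounded.snd hs hΩ) fun c hc => ?_
  rintro _ ⟨⟨a, x⟩, hax, rfl⟩
  obtain ⟨ω, hω, rfl⟩ := hc (mem_image_of_mem Prod.snd hax)
  exact ⟨f a ω, hSΩ (mk_mem_prod (hS (mem_image_of_mem Prod.fst hax)) hω), (map_smul _ _ _).symm⟩

variable [ContinuousSMul 𝕜 M] [ContinuousSMul 𝕜 N]

theorem LinearMap.tendsto_zero_of_tendsto_zero₂ (f : M →ₗ[𝕜] N →ₗ[𝕜] F)
    (h : Tendsto (fun p : M × N => f p.1 p.2) (𝓝 0 ×ˢ 𝓝 0) (𝓝 0)) (m : M) :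
    Tendsto (f m) (𝓝 0) (𝓝 0) := by
  intro W hW
  obtain ⟨U, hU, V, hV, hUV⟩ := mem_prod_iff.1 (h hW)
  obtain ⟨c, hmc, hc⟩ :=
    ((absorbent_nhds_zero (𝕜 := 𝕜) hU m).eventually.and (eventually_ne_cobounded 0)).exists
  obtain ⟨u, hu, rfl⟩ := hmc rfl
  -- `f (c • u) n = f u (c • n)` with `u ∈ U`, and `c • n ∈ V` for `n` near `0`.
  rw [mem_map]
  filter_upwards [(set_smul_mem_nhds_zero_iff (inv_ne_zero hc)).2 hV] with n hn
  rw [mem_preimage, map_smul, LinearMap.smul_apply, ← map_smul]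
  exact hUV (mk_mem_prod hu ((mem_inv_smul_set_iff₀ hc _ _).1 hn))

theorem LinearMap.continuous₂_of_tendsto_zero [IsTopologicalAddGroup M] [IsTopologicalAddGroup N]
    [IsTopologicalAddGroup F] (f : M →ₗ[𝕜] N →ₗ[𝕜] F)
    (h : Tendsto (fun p : M × N => f p.1 p.2) (𝓝 0 ×ˢ 𝓝 0) (𝓝 0)) :
    Continuous fun p : M × N => f p.1 p.2 := by
  refine continuous_of_continuousAt_zero₂ (LinearMap.toAddMonoidHom'.comp f.toAddMonoidHom)
    ?_ (fun m => ?_) fun n => ?_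
  · simpa [ContinuousAt, nhds_prod_eq] using h
  · simpa [ContinuousAt] using f.tendsto_zero_of_tendsto_zero₂ h m
  · simpa [ContinuousAt] using show Tendsto (fun m => f m n) (𝓝 0) (𝓝 0) from
      f.flip.tendsto_zero_of_tendsto_zero₂ (h.comp (tendsto_snd.prodMk tendsto_fst)) n

end Bilinear

section QuotientAction

variable {𝕜 A E : Type*} [RCLike 𝕜] [CommRing A] [Algebra 𝕜 A]
  [AddCommGroup E] [Module 𝕜 E] [Module A E] [IsScalarTower 𝕜 A E]
  (J : Submodule 𝕜 E) (hJ : ∀ a : A, ∀ x ∈ J, a • x ∈ J)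

def Submodule.quotientSMul : A →ₗ[𝕜] (E ⧸ J) →ₗ[𝕜] E ⧸ J :=
  J.mapQLinear J ∘ₗ (Algebra.lsmul 𝕜 𝕜 E).toLinearMap.codRestrict (J.compatibleMaps J) hJ

theorem Submodule.quotientSMul_mkQ (a : A) (x : E) :
    J.quotientSMul hJ a (J.mkQ x) = J.mkQ (a • x) :=
  rfl

theorem Submodule.quotientSMul_mul (a b : A) (q : E ⧸ J) :
    J.quotientSMul hJ a (J.quotientSMul hJ b q) = J.quotientSMul hJ (a * b) q := by
  obtain ⟨x, rfl⟩ := J.mkQ_surjective q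
  simp only [quotientSMul_mkQ, mul_smul]

theorem Submodule.quotientSMul_one (q : E ⧸ J) : J.quotientSMul hJ 1 q = q := by
  obtain ⟨x, rfl⟩ := J.mkQ_surjective q
  rw [quotientSMul_mkQ, one_smul]

theorem Submodule.tendsto_quotientSMul [TopologicalSpace E] [IsTopologicalAddGroup E]
    {F : Filter A} (h : Tendsto (fun p : A × E => p.1 • p.2) (F ×ˢ 𝓝 0) (𝓝 0)) :
    Tendsto (fun p : A × E ⧸ J => J.quotientSMul hJ p.1 p.2) (F ×ˢ 𝓝 0) (𝓝 0) := by
  have hmap : Filter.map (Prod.map id J.mkQ) (F ×ˢ 𝓝 0) = F ×ˢ 𝓝 (0 : E ⧸ J) := by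
    rw [← prod_map_map_eq', Filter.map_id, J.isOpenQuotientMap_mkQ.map_nhds_eq, map_zero]
  rw [← hmap, tendsto_map'_iff]
  exact (J.continuous_mkQ.tendsto' 0 0 (map_zero _)).comp h

end QuotientAction

section TensorProduct

open TensorProduct

variable {𝕜 M N : Type*} [RCLike 𝕜] [AddCommGroup M] [Module 𝕜 M] [AddCommGroup N] [Module 𝕜 N]

theorem TensorProduct.absorbent_of_absorbs_tmul {B : Set (M ⊗[𝕜] N)} (hB : RCConvex 𝕜 B)
    (h : ∀ m n, Absorbs 𝕜 B {m ⊗ₜ n}) : Absorbent 𝕜 B := by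
  intro x
  induction x using TensorProduct.induction_on with
  | zero => simpa using h 0 0
  | tmul m n => exact h m n
  | add x y hx hy => simpa [singleton_add_singleton] using hB.absorbs_add hx hy

variable [TopologicalSpace M] [TopologicalSpace N]

theorem IsBetaTensorTop.mem_nhds_zero [ContinuousSMul 𝕜 M] [ContinuousSMul 𝕜 N]
    {τ : TopologicalSpace (M ⊗[𝕜] N)} (hτ : IsBetaTensorTop 𝕜 inferInstance inferInstance τ)
    {B : Set (M ⊗[𝕜] N)} (hb : Balanced 𝕜 B) (hc : RCConvex 𝕜 B)
    (hB : ∀ s : Set (M × N), IsVonNBounded 𝕜 s →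
      Absorbs 𝕜 B ((fun p : M × N => p.1 ⊗ₜ[𝕜] p.2) '' s)) :
    B ∈ @nhds _ τ 0 := by
  have ha : Absorbent 𝕜 B :=
    absorbent_of_absorbs_tmul hc fun m n => by simpa using hB _ (isVonNBounded_singleton (m, n))
  have hbasis := absConvexTopology_hasBasis hb hc ha
  have hle : τ ≤ absConvexTopology hb hc ha :=
    hτ.2.2 _ (isLCTop_absConvexTopology hb hc ha) fun s hs W hW => by
      obtain ⟨c, hc0, hcW⟩ := hbasis.mem_iff.1 hW
      exact ((hB s hs).smul_set_left hc0).mono_left hcW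
  exact nhds_mono hle (by simpa using hbasis.mem_of_mem one_ne_zero)

theorem IsProjTensorTop.mem_nhds_zero [IsTopologicalAddGroup M] [ContinuousSMul 𝕜 M]
    [IsTopologicalAddGroup N] [ContinuousSMul 𝕜 N]
    {τ : TopologicalSpace (M ⊗[𝕜] N)} (hτ : IsProjTensorTop 𝕜 inferInstance inferInstance τ)
    {B : Set (M ⊗[𝕜] N)} (hb : Balanced 𝕜 B) (hc : RCConvex 𝕜 B) {U : Set M} {V : Set N}
    (hU : U ∈ 𝓝 0) (hV : V ∈ 𝓝 0) (hUV : ∀ m ∈ U, ∀ n ∈ V, m ⊗ₜ[𝕜] n ∈ B) :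
    B ∈ @nhds _ τ 0 := by
  have ha : Absorbent 𝕜 B := absorbent_of_absorbs_tmul hc fun m n => by
    obtain ⟨d, hnd, hd⟩ :=
      ((absorbent_nhds_zero (𝕜 := 𝕜) hV n).eventually.and (eventually_ne_cobounded 0)).exists
    obtain ⟨v, hv, rfl⟩ := hnd rfl
    refine Filter.Eventually.mono (absorbent_nhds_zero hU (d • m)) fun c hc => ?_
    obtain ⟨u, hu, hcu : c • u = d • m⟩ := hc rfl
    rintro _ rfl
    refine ⟨u ⊗ₜ v, hUV u hu v hv, ?_⟩
    change c • u ⊗ₜ[𝕜] v = m ⊗ₜ[𝕜] (d • v)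
    rw [smul_tmul', hcu, smul_tmul]
  let := absConvexTopology hb hc ha
  have hbasis := absConvexTopology_hasBasis hb hc ha
  have := (isLCTop_absConvexTopology hb hc ha).1.1
  have hcont : Continuous fun p : M × N => p.1 ⊗ₜ[𝕜] p.2 := by
    refine (TensorProduct.mk 𝕜 M N).continuous₂_of_tendsto_zero (hbasis.tendsto_right_iff.2 ?_)
    intro c hc0
    filter_upwards [prod_mem_prod ((set_smul_mem_nhds_zero_iff hc0).2 hU) hV]
    rintro ⟨_, n⟩ ⟨⟨u, hu, rfl⟩, hn⟩
    exact ⟨u ⊗ₜ n, hUV u hu n hn, smul_tmul' c u n⟩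
  exact nhds_mono (hτ.2.2 _ (isLCTop_absConvexTopology hb hc ha) hcont)
    (by simpa using hbasis.mem_of_mem one_ne_zero)

end TensorProduct

section TensorAction

open TensorProduct

variable {𝕜 A M N : Type*} [RCLike 𝕜] [CommRing A] [Algebra 𝕜 A]
  [AddCommGroup M] [Module 𝕜 M] [Module A M] [IsScalarTower 𝕜 A M]
  [AddCommGroup N] [Module 𝕜 N]

theorem smul_mem_balancedRelComm [Module A N] (a : A) {x : M ⊗[𝕜] N}
    (hx : x ∈ balancedRelComm 𝕜 A M N) : a • x ∈ balancedRelComm 𝕜 A M N := by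
  suffices balancedRelComm 𝕜 A M N ≤
      (balancedRelComm 𝕜 A M N).comap (Algebra.lsmul 𝕜 𝕜 (M ⊗[𝕜] N) a) from this hx
  refine Submodule.span_le.2 ?_
  rintro _ ⟨b, m, n, rfl⟩
  refine Submodule.subset_span ⟨b, a • m, n, ?_⟩
  simp only [Algebra.lsmul_coe, smul_sub, smul_tmul', smul_comm a b]

theorem smul_mem_of_eq_closure_balancedRelComm [Module A N] [TopologicalSpace (M ⊗[𝕜] N)]
    {J : Submodule 𝕜 (M ⊗[𝕜] N)}
    (hJ : (J : Set (M ⊗[𝕜] N)) = closure (balancedRelComm 𝕜 A M N))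
    (hcont : ∀ a : A, Continuous fun x : M ⊗[𝕜] N => a • x) (a : A) :
    ∀ x ∈ J, a • x ∈ J := by
  simp only [← SetLike.mem_coe, hJ]
  exact fun x hx => map_mem_closure (hcont a) hx fun _ => smul_mem_balancedRelComm a

variable [TopologicalSpace A] [TopologicalSpace M] [TopologicalSpace N]
  [TopologicalSpace (M ⊗[𝕜] N)]

theorem IsBetaTensorTop.tendsto_smul [ContinuousSMul 𝕜 M] [ContinuousSMul 𝕜 N]
    (hT : IsBetaTensorTop 𝕜 ‹TopologicalSpace M› ‹TopologicalSpace N› ‹_›)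
    (hsM : BddMap 𝕜 (inferInstance : TopologicalSpace (A × M)) inferInstance
      (fun p : A × M => p.1 • p.2))
    {S : Set A} (hS : IsVonNBounded 𝕜 S) :
    Tendsto (fun p : A × M ⊗[𝕜] N => p.1 • p.2) (𝓟 S ×ˢ 𝓝 0) (𝓝 0) := by
  intro W hW
  obtain ⟨W', hW', hW'W, hb, hc⟩ := hT.1.exists_balanced_rcConvex_subset hW
  have hΩ : {x : M ⊗[𝕜] N | ∀ a ∈ S, a • x ∈ W'} ∈ 𝓝 0 := by
    refine hT.mem_nhds_zero (hb.setOf_forall_smul_mem S) (hc.setOf_forall_smul_mem S)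
      fun s hs => Absorbs.setOf_forall_smul_mem S ?_
    -- `a • (m ⊗ n) = (a • m) ⊗ n`, and these pairs `(a • m, n)` form a bounded set.
    have hbdd : IsVonNBounded 𝕜
        (((fun p : A × M => p.1 • p.2) '' (S ×ˢ (Prod.fst '' s))) ×ˢ (Prod.snd '' s)) :=
      IsVonNBounded.prod (hsM _ (hS.prod hs.fst)) hs.snd
    refine (hT.2.1 _ hbdd W' hW').mono_right ?_
    rintro _ ⟨a, ha, _, ⟨p, hp, rfl⟩, rfl⟩
    exact ⟨(a • p.1, p.2), ⟨⟨(a, p.1), ⟨ha, p, hp, rfl⟩, rfl⟩, p, hp, rfl⟩,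
      (smul_tmul' a p.1 p.2).symm⟩
  exact mem_map.2 <| mem_of_superset (prod_mem_prod (mem_principal_self S) hΩ)
    fun p (hp : p ∈ S ×ˢ _) => hW'W (hp.2 p.1 hp.1)

theorem IsBetaTensorTop.continuous_const_smul [ContinuousSMul 𝕜 A] [ContinuousSMul 𝕜 M]
    [ContinuousSMul 𝕜 N] (hT : IsBetaTensorTop 𝕜 ‹TopologicalSpace M› ‹TopologicalSpace N› ‹_›)
    (hsM : BddMap 𝕜 (inferInstance : TopologicalSpace (A × M)) inferInstance
      (fun p : A × M => p.1 • p.2)) (a : A) :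
    Continuous fun x : M ⊗[𝕜] N => a • x := by
  have := hT.1.1.1
  have hpair : Tendsto (fun x : M ⊗[𝕜] N => (a, x)) (𝓝 0) (𝓟 {a} ×ˢ 𝓝 0) :=
    (tendsto_principal.2 (Eventually.of_forall fun _ => mem_singleton a)).prodMk tendsto_id
  have h := (hT.tendsto_smul hsM (isVonNBounded_singleton a)).comp hpair
  have e : ⇑(DistribSMul.toAddMonoidHom (M ⊗[𝕜] N) a) = fun x => a • x := by ext; simp
  rw [← e]
  refine continuous_of_continuousAt_zero _ ?_
  rw [ContinuousAt, e]
  simpa [Function.comp_def] using h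

theorem IsProjTensorTop.tendsto_smul [IsTopologicalAddGroup M] [ContinuousSMul 𝕜 M]
    [IsTopologicalAddGroup N] [ContinuousSMul 𝕜 N]
    (hT : IsProjTensorTop 𝕜 ‹TopologicalSpace M› ‹TopologicalSpace N› ‹_›)
    (hsM : Continuous fun p : A × M => p.1 • p.2) :
    Tendsto (fun p : A × M ⊗[𝕜] N => p.1 • p.2) (𝓝 0 ×ˢ 𝓝 0) (𝓝 0) := by
  intro W hW
  obtain ⟨W', hW', hW'W, hb, hc⟩ := hT.1.exists_balanced_rcConvex_subset hW
  obtain ⟨U, hU, V, hV, hUV⟩ :=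
    mem_nhds_prod_iff.1 (hT.2.1.tendsto' (0, 0) 0 (zero_tmul _ _) hW')
  obtain ⟨UA, hUA, U', hU', hAU⟩ := mem_nhds_prod_iff.1 (hsM.tendsto' (0, 0) 0 (zero_smul _ _) hU)
  have hΩ : {x : M ⊗[𝕜] N | ∀ a ∈ UA, a • x ∈ W'} ∈ 𝓝 0 :=
    hT.mem_nhds_zero (hb.setOf_forall_smul_mem UA) (hc.setOf_forall_smul_mem UA) hU' hV
      fun m hm n hn a ha => by
        rw [smul_tmul']
        exact hUV (mk_mem_prod (hAU (mk_mem_prod ha hm)) hn)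
  exact mem_map.2 <| mem_of_superset (prod_mem_prod hUA hΩ)
    fun p (hp : p ∈ UA ×ˢ _) => hW'W (hp.2 p.1 hp.1)

theorem IsProjTensorTop.continuous_smul [IsTopologicalAddGroup A] [ContinuousSMul 𝕜 A]
    [IsTopologicalAddGroup M] [ContinuousSMul 𝕜 M] [IsTopologicalAddGroup N]
    [ContinuousSMul 𝕜 N] (hT : IsProjTensorTop 𝕜 ‹TopologicalSpace M› ‹TopologicalSpace N› ‹_›)
    (hsM : Continuous fun p : A × M => p.1 • p.2) :
    Continuous fun p : A × M ⊗[𝕜] N => p.1 • p.2 := by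
  have := hT.1.1.1
  have := hT.1.1.2
  let smul : A →ₗ[𝕜] M ⊗[𝕜] N →ₗ[𝕜] M ⊗[𝕜] N := (Algebra.lsmul 𝕜 𝕜 _).toLinearMap
  exact smul.continuous₂_of_tendsto_zero (hT.tendsto_smul hsM)

end TensorAction

theorem statement10_general {𝕜 : Type*} [RCLike 𝕜]
    (A : Type*) [CommRing A] [Algebra 𝕜 A] [TopologicalSpace A]
    (hA : IsLCTop 𝕜 A (inferInstance))
    (M : Type*) [AddCommGroup M] [Module 𝕜 M] [Module A M] [IsScalarTower 𝕜 A M]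
    [TopologicalSpace M] (hM : IsLCTop 𝕜 M (inferInstance))
    (N : Type*) [AddCommGroup N] [Module 𝕜 N] [Module A N]
    [TopologicalSpace N] (hN : IsLCTop 𝕜 N (inferInstance)) :
    -- bounded case: M ⊗_A^β N is a bounded A-module
    (∀ (_ : BddMap 𝕜 (inferInstance : TopologicalSpace (A × A)) (inferInstance)
        (fun p : A × A => p.1 * p.2))
       (_ : BddMap 𝕜 (inferInstance : TopologicalSpace (A × M)) (inferInstance)
        (fun p : A × M => p.1 • p.2))
       (_ : BddMap 𝕜 (inferInstance : TopologicalSpace (A × N)) (inferInstance)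
        (fun p : A × N => p.1 • p.2))
       (τT : TopologicalSpace (TensorProduct 𝕜 M N))
       (_ : IsBetaTensorTop 𝕜 (inferInstance) (inferInstance) τT)
       (J : Submodule 𝕜 (TensorProduct 𝕜 M N))
       (_ : (J : Set (TensorProduct 𝕜 M N)) = @closure _ τT (balancedRelComm 𝕜 A M N))
       (τQ : TopologicalSpace (TensorProduct 𝕜 M N ⧸ J)), τQ = τT.coinduced J.mkQ →
      ∃ smul : A → (TensorProduct 𝕜 M N ⧸ J) →ₗ[𝕜] (TensorProduct 𝕜 M N ⧸ J),
        (∀ (a : A) (m : M) (n : N),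
          smul a (J.mkQ (m ⊗ₜ[𝕜] n)) = J.mkQ ((a • m) ⊗ₜ[𝕜] n)) ∧
        (∀ (a b : A) (x : TensorProduct 𝕜 M N ⧸ J), smul a (smul b x) = smul (a * b) x) ∧
        (∀ x, smul 1 x = x) ∧
        (∀ (a b : A) (x : TensorProduct 𝕜 M N ⧸ J), smul (a + b) x = smul a x + smul b x) ∧
        BddMap 𝕜 (@instTopologicalSpaceProd A (TensorProduct 𝕜 M N ⧸ J) (inferInstance) τQ)
          τQ (fun p : A × (TensorProduct 𝕜 M N ⧸ J) => smul p.1 p.2)) ∧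
    -- locally convex case: M ⊗_A^π N is a locally convex A-module
    (∀ (_ : Continuous fun p : A × A => p.1 * p.2)
       (_ : Continuous fun p : A × M => p.1 • p.2)
       (_ : Continuous fun p : A × N => p.1 • p.2)
       (τT : TopologicalSpace (TensorProduct 𝕜 M N))
       (_ : IsProjTensorTop 𝕜 (inferInstance) (inferInstance) τT)
       (J : Submodule 𝕜 (TensorProduct 𝕜 M N))
       (_ : (J : Set (TensorProduct 𝕜 M N)) = @closure _ τT (balancedRelComm 𝕜 A M N))
       (τQ : TopologicalSpace (TensorProduct 𝕜 M N ⧸ J)), τQ = τT.coinduced J.mkQ →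
      ∃ smul : A → (TensorProduct 𝕜 M N ⧸ J) →ₗ[𝕜] (TensorProduct 𝕜 M N ⧸ J),
        (∀ (a : A) (m : M) (n : N),
          smul a (J.mkQ (m ⊗ₜ[𝕜] n)) = J.mkQ ((a • m) ⊗ₜ[𝕜] n)) ∧
        (∀ (a b : A) (x : TensorProduct 𝕜 M N ⧸ J), smul a (smul b x) = smul (a * b) x) ∧
        (∀ x, smul 1 x = x) ∧
        (∀ (a b : A) (x : TensorProduct 𝕜 M N ⧸ J), smul (a + b) x = smul a x + smul b x) ∧
        @Continuous (A × (TensorProduct 𝕜 M N ⧸ J)) (TensorProduct 𝕜 M N ⧸ J)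
          (@instTopologicalSpaceProd A (TensorProduct 𝕜 M N ⧸ J) (inferInstance) τQ) τQ
          (fun p : A × (TensorProduct 𝕜 M N ⧸ J) => smul p.1 p.2)) := by
  obtain ⟨⟨_, _⟩, -⟩ := hA
  obtain ⟨⟨_, _⟩, -⟩ := hM
  obtain ⟨⟨_, _⟩, -⟩ := hN
  refine ⟨fun _ hsM _ τT hT J hJ τQ hτQ => ?_, fun _ hsM _ τT hT J hJ τQ hτQ => ?_⟩
  · subst hτQ
    let := τT
    obtain ⟨⟨_, _⟩, -⟩ := hT.1
    have hJA := smul_mem_of_eq_closure_balancedRelComm hJ (hT.continuous_const_smul hsM)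
    refine ⟨J.quotientSMul hJA, fun _ _ _ => rfl, J.quotientSMul_mul hJA, J.quotientSMul_one hJA,
      fun _ _ _ => LinearMap.map_add₂ _ _ _ _, ?_⟩
    exact bddMap_of_tendsto_principal_isVonNBounded _
      fun S hS => J.tendsto_quotientSMul hJA (hT.tendsto_smul hsM hS)
  · subst hτQ
    let := τT
    obtain ⟨⟨_, _⟩, -⟩ := hT.1
    have hJA := smul_mem_of_eq_closure_balancedRelComm hJ fun a =>
      (hT.continuous_smul hsM).comp (continuous_const.prodMk continuous_id)
    refine ⟨J.quotientSMul hJA, fun _ _ _ => rfl, J.quotientSMul_mul hJA, J.quotientSMul_one hJA,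
      fun _ _ _ => LinearMap.map_add₂ _ _ _ _, ?_⟩
    exact (J.quotientSMul hJA).continuous₂_of_tendsto_zero
      (J.tendsto_quotientSMul hJA (hT.tendsto_smul hsM))

theorem statement10 {𝕜 : Type*} [RCLike 𝕜]
    (A : Type*) [CommRing A] [Algebra 𝕜 A] [TopologicalSpace A] [T2Space A]
    (hA : IsLCTop 𝕜 A (inferInstance))
    (M : Type*) [AddCommGroup M] [Module 𝕜 M] [Module A M] [IsScalarTower 𝕜 A M]
    [TopologicalSpace M] [T2Space M] (hM : IsLCTop 𝕜 M (inferInstance))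
    (N : Type*) [AddCommGroup N] [Module 𝕜 N] [Module A N] [IsScalarTower 𝕜 A N]
    [TopologicalSpace N] [T2Space N] (hN : IsLCTop 𝕜 N (inferInstance)) :
    -- bounded case: M ⊗_A^β N is a bounded A-module
    (∀ (_ : BddMap 𝕜 (inferInstance : TopologicalSpace (A × A)) (inferInstance)
        (fun p : A × A => p.1 * p.2))
       (_ : BddMap 𝕜 (inferInstance : TopologicalSpace (A × M)) (inferInstance)
        (fun p : A × M => p.1 • p.2))
       (_ : BddMap 𝕜 (inferInstance : TopologicalSpace (A × N)) (inferInstance)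
        (fun p : A × N => p.1 • p.2))
       (τT : TopologicalSpace (TensorProduct 𝕜 M N))
       (_ : IsBetaTensorTop 𝕜 (inferInstance) (inferInstance) τT)
       (J : Submodule 𝕜 (TensorProduct 𝕜 M N))
       (_ : (J : Set (TensorProduct 𝕜 M N)) = @closure _ τT (balancedRelComm 𝕜 A M N))
       (τQ : TopologicalSpace (TensorProduct 𝕜 M N ⧸ J)), τQ = τT.coinduced J.mkQ →
      ∃ smul : A → (TensorProduct 𝕜 M N ⧸ J) →ₗ[𝕜] (TensorProduct 𝕜 M N ⧸ J),
        (∀ (a : A) (m : M) (n : N),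
          smul a (J.mkQ (m ⊗ₜ[𝕜] n)) = J.mkQ ((a • m) ⊗ₜ[𝕜] n)) ∧
        (∀ (a b : A) (x : TensorProduct 𝕜 M N ⧸ J), smul a (smul b x) = smul (a * b) x) ∧
        (∀ x, smul 1 x = x) ∧
        (∀ (a b : A) (x : TensorProduct 𝕜 M N ⧸ J), smul (a + b) x = smul a x + smul b x) ∧
        BddMap 𝕜 (@instTopologicalSpaceProd A (TensorProduct 𝕜 M N ⧸ J) (inferInstance) τQ)
          τQ (fun p : A × (TensorProduct 𝕜 M N ⧸ J) => smul p.1 p.2)) ∧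
    -- locally convex case: M ⊗_A^π N is a locally convex A-module
    (∀ (_ : Continuous fun p : A × A => p.1 * p.2)
       (_ : Continuous fun p : A × M => p.1 • p.2)
       (_ : Continuous fun p : A × N => p.1 • p.2)
       (τT : TopologicalSpace (TensorProduct 𝕜 M N))
       (_ : IsProjTensorTop 𝕜 (inferInstance) (inferInstance) τT)
       (J : Submodule 𝕜 (TensorProduct 𝕜 M N))
       (_ : (J : Set (TensorProduct 𝕜 M N)) = @closure _ τT (balancedRelComm 𝕜 A M N))
       (τQ : TopologicalSpace (TensorProduct 𝕜 M N ⧸ J)), τQ = τT.coinduced J.mkQ →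
      ∃ smul : A → (TensorProduct 𝕜 M N ⧸ J) →ₗ[𝕜] (TensorProduct 𝕜 M N ⧸ J),
        (∀ (a : A) (m : M) (n : N),
          smul a (J.mkQ (m ⊗ₜ[𝕜] n)) = J.mkQ ((a • m) ⊗ₜ[𝕜] n)) ∧
        (∀ (a b : A) (x : TensorProduct 𝕜 M N ⧸ J), smul a (smul b x) = smul (a * b) x) ∧
        (∀ x, smul 1 x = x) ∧
        (∀ (a b : A) (x : TensorProduct 𝕜 M N ⧸ J), smul (a + b) x = smul a x + smul b x) ∧
        @Continuous (A × (TensorProduct 𝕜 M N ⧸ J)) (TensorProduct 𝕜 M N ⧸ J)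
          (@instTopologicalSpaceProd A (TensorProduct 𝕜 M N ⧸ J) (inferInstance) τQ) τQ
          (fun p : A × (TensorProduct 𝕜 M N ⧸ J) => smul p.1 p.2)) :=
  statement10_general A hA M hM N hN
end

section
/- Let a locally convex space E be the strict inductive limit of an increasing sequence of subspaces E_n with embeddings ι_n : E_n → E, and let F and G be arbitrary locally convex spaces. Then a bilinear mapping f : E × F → G is bounded if and only if all compositions f ∘ (ι_n × id) : E_n × F → G are bounded. -/
/-!
STATEMENT 16: if a locally convex space `E` is the strict inductive limit of an
increasing sequence of subspaces `Eₙ`, then a bilinear map `f : E × F → G` is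
bounded iff all the compositions `f ∘ (ιₙ × id) : Eₙ × F → G` are bounded.
-/

open MulOpposite Set
open scoped TensorProduct Pointwise

/-!
Since `Eₙ` carries the topology induced from `E`, the map `ιₙ × id : Eₙ × F → E × F` is a
linear topological embedding, so a subset of `Eₙ × F` is bounded iff its image in `E × F` is.
Conversely, a bounded subset of `E × F` has bounded first projection, which lies in some `Eₙ`;
so the bounded sets of `E × F` are exactly the images of bounded sets of the `Eₙ × F`.
-/

open Bornology Filter Topology

section VonNBounded

variable {𝕜 : Type*} [RCLike 𝕜]

theorem vnbdd_iff_isVonNBounded {E : Type*} [AddCommGroup E] [Module 𝕜 E] [TopologicalSpace E]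
    {s : Set E} : VNBdd 𝕜 inferInstance s ↔ IsVonNBounded 𝕜 s :=
  ⟨fun h _ hV => h _ hV, fun h _ hV => h hV⟩

theorem Topology.IsInducing.isVonNBounded_image_iff {X Y : Type*} [AddCommGroup X] [Module 𝕜 X]
    [TopologicalSpace X] [AddCommGroup Y] [Module 𝕜 Y] [TopologicalSpace Y]
    {j : X →ₗ[𝕜] Y} (hj : IsInducing j) {s : Set X} :
    IsVonNBounded 𝕜 (j '' s) ↔ IsVonNBounded 𝕜 s := by
  simp_rw [isVonNBounded_iff_tendsto_smallSets_nhds, hj.nhds_eq_comap, map_zero,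
    smallSets_comap_eq_comap_image, tendsto_comap_iff, Function.comp_def, ← image_smul_set]

theorem bddMap_iff_forall_comp {ι Y Z : Type*} {X : ι → Type*} [∀ i, AddCommGroup (X i)]
    [∀ i, Module 𝕜 (X i)] [∀ i, TopologicalSpace (X i)] [AddCommGroup Y] [Module 𝕜 Y]
    [TopologicalSpace Y] [AddCommGroup Z] [Module 𝕜 Z] [TopologicalSpace Z]
    (j : ∀ i, X i →ₗ[𝕜] Y) (hj : ∀ i, IsInducing (j i))
    (hcover : ∀ s : Set Y, IsVonNBounded 𝕜 s → ∃ i, s ⊆ Set.range (j i)) (f : Y → Z) :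
    BddMap 𝕜 inferInstance inferInstance f ↔
      ∀ i, BddMap 𝕜 inferInstance inferInstance (f ∘ j i) := by
  simp only [BddMap, vnbdd_iff_isVonNBounded]
  refine ⟨fun hf i s hs => ?_, fun hf s hs => ?_⟩
  · rw [Set.image_comp]
    exact hf _ ((hj i).isVonNBounded_image_iff.2 hs)
  · obtain ⟨i, hi⟩ := hcover s hs
    have hs' : IsVonNBounded 𝕜 (j i ⁻¹' s) := by
      rwa [← (hj i).isVonNBounded_image_iff, Set.image_preimage_eq_of_subset hi]
    have := hf i _ hs'
    rwa [Set.image_comp, Set.image_preimage_eq_of_subset hi] at this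

theorem Bornology.IsVonNBounded.exists_subset_range_prodMap_subtype {E F ι : Type*}
    [AddCommGroup E] [Module 𝕜 E] [TopologicalSpace E] [AddCommGroup F] [Module 𝕜 F]
    [TopologicalSpace F] (p : ι → Submodule 𝕜 E)
    (hbdd : ∀ s : Set E, IsVonNBounded 𝕜 s → ∃ i, s ⊆ p i) {s : Set (E × F)}
    (hs : IsVonNBounded 𝕜 s) :
    ∃ i, s ⊆ Set.range ((p i).subtype.prodMap (LinearMap.id : F →ₗ[𝕜] F)) := by
  obtain ⟨i, hi⟩ := hbdd _ (hs.image (ContinuousLinearMap.fst 𝕜 E F))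
  exact ⟨i, fun x hx => ⟨(⟨x.1, hi ⟨x, hx, rfl⟩⟩, x.2), rfl⟩⟩

end VonNBounded

theorem statement16_general {𝕜 : Type*} [RCLike 𝕜]
    (E : Type*) [AddCommGroup E] [Module 𝕜 E] [TopologicalSpace E]
    (F : Type*) [AddCommGroup F] [Module 𝕜 F] [TopologicalSpace F]
    (G : Type*) [AddCommGroup G] [Module 𝕜 G] [TopologicalSpace G]
    -- the increasing sequence of subspaces, with their own topologies
    (p : ℕ → Submodule 𝕜 E)
    (t : ∀ n, TopologicalSpace ↥(p n))
    -- E induces on each Eₙ its given topology (a property of strict inductive limits)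
    (hind : ∀ n, t n =
      TopologicalSpace.induced (Subtype.val : ↥(p n) → E) (inferInstance))
    -- every bounded subset of E is contained in some Eₙ
    (hbdd : ∀ s : Set E, VNBdd 𝕜 (inferInstance) s → ∃ n, s ⊆ (p n : Set E)) :
    ∀ f : E × F → G, IsBilinMap 𝕜 f →
      (BddMap 𝕜 (inferInstance : TopologicalSpace (E × F)) (inferInstance) f ↔
       ∀ n, BddMap 𝕜 (@instTopologicalSpaceProd ↥(p n) F (t n) (inferInstance))
         (inferInstance) (fun q : ↥(p n) × F => f ((q.1 : E), q.2))) := by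
  intro f _
  obtain rfl : t = fun n => instTopologicalSpaceSubtype := funext hind
  simp only [vnbdd_iff_isVonNBounded] at hbdd
  exact bddMap_iff_forall_comp (fun n => (p n).subtype.prodMap LinearMap.id)
    (fun _ => IsInducing.subtypeVal.prodMap IsInducing.id)
    (fun _ => IsVonNBounded.exists_subset_range_prodMap_subtype p hbdd) f

theorem statement16 {𝕜 : Type*} [RCLike 𝕜]
    (E : Type*) [AddCommGroup E] [Module 𝕜 E] [TopologicalSpace E] [T2Space E]
    (hE : IsLCTop 𝕜 E (inferInstance))
    (F : Type*) [AddCommGroup F] [Module 𝕜 F] [TopologicalSpace F] [T2Space F]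
    (hF : IsLCTop 𝕜 F (inferInstance))
    (G : Type*) [AddCommGroup G] [Module 𝕜 G] [TopologicalSpace G] [T2Space G]
    (hG : IsLCTop 𝕜 G (inferInstance))
    -- the increasing sequence of subspaces, with their own topologies
    (p : ℕ → Submodule 𝕜 E) (hmono : Monotone p)
    (t : ∀ n, TopologicalSpace ↥(p n))
    (hlc : ∀ n, IsLCTop 𝕜 ↥(p n) (t n))
    -- each Eₙ₊₁ induces on Eₙ its given topology (strictness)
    (hstep : ∀ n, t n =
      (t (n + 1)).induced (Submodule.inclusion (hmono (Nat.le_succ n))))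
    -- E carries the finest locally convex topology making all inclusions continuous
    (hcont : ∀ n, @Continuous _ _ (t n) (inferInstance) (Subtype.val : ↥(p n) → E))
    (hfinest : ∀ τ' : TopologicalSpace E, IsLCTop 𝕜 E τ' →
      (∀ n, @Continuous _ _ (t n) τ' (Subtype.val : ↥(p n) → E)) →
      (inferInstance : TopologicalSpace E) ≤ τ')
    -- E induces on each Eₙ its given topology (a property of strict inductive limits)
    (hind : ∀ n, t n =
      TopologicalSpace.induced (Subtype.val : ↥(p n) → E) (inferInstance))
    -- every bounded subset of E is contained in some Eₙ
    (hbdd : ∀ s : Set E, VNBdd 𝕜 (inferInstance) s → ∃ n, s ⊆ (p n : Set E)) :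
    ∀ f : E × F → G, IsBilinMap 𝕜 f →
      (BddMap 𝕜 (inferInstance : TopologicalSpace (E × F)) (inferInstance) f ↔
       ∀ n, BddMap 𝕜 (@instTopologicalSpaceProd ↥(p n) F (t n) (inferInstance))
         (inferInstance) (fun q : ↥(p n) × F => f ((q.1 : E), q.2))) :=
  statement16_general E F G p t hind hbdd
end
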